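/- Let n ∈ ℕ, let χ = (χ_1,…,χ_n) ∈ ℂ^n, and let S be a set of polynomials in MvPolynomial (Fin n) ℂ. Define the directional derivative D_χ P = Σ_{i} χ_i · (∂P/∂X_i), and for u ∈ ℂ let τ_u be the ℂ-algebra endomorphism of MvPolynomial (Fin n) ℂ determined by X_i ↦ X_i + u·χ_i. Then the ℂ-subalgebra generated by { D_χ^m P : P ∈ S, m ∈ ℕ } equals the ℂ-subalgebra generated by { τ_u(P) : P ∈ S, u ∈ ℂ }. -/

import Mathlib

open MvPolynomial

/-- The directional derivative `D_χ P = Σ_i χ_i · ∂P/∂X_i`. -/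
noncomputable def dirDeriv {n : ℕ} (χ : Fin n → ℂ) (P : MvPolynomial (Fin n) ℂ) :
    MvPolynomial (Fin n) ℂ :=
  ∑ i, MvPolynomial.C (χ i) * MvPolynomial.pderiv i P

/-- The shift `τ_u : X_i ↦ X_i + u·χ_i`, a `ℂ`-algebra endomorphism. -/
noncomputable def shiftBy {n : ℕ} (χ : Fin n → ℂ) (u : ℂ) :
    MvPolynomial (Fin n) ℂ →ₐ[ℂ] MvPolynomial (Fin n) ℂ :=
  MvPolynomial.aeval fun i => MvPolynomial.X i + MvPolynomial.C (u * χ i)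

/-!
Expanding `P(y + uχ)` as a polynomial in `u` gives Taylor's formula: its `m`-th coefficient is
`D_χ^m P / m!`. So each `τ_u P` is a linear combination of the `D_χ^m P`, and conversely, since `ℂ`
is infinite, the coefficients of a polynomial lie in the linear span of its values. Both generating
sets therefore span the same subspace, hence generate the same subalgebra.
-/

namespace Polynomial

variable {K A : Type*} [Field K] [Ring A] [Algebra K A]

theorem eval_algebraMap_mem_span_range_coeff (q : A[X]) (u : K) :
    q.eval (algebraMap K A u) ∈ Submodule.span K (Set.range q.coeff) := by
  rw [eval_eq_sum_range]
  refine Submodule.sum_mem _ fun k _ => ?_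
  rw [← map_pow, ← Algebra.commutes, ← Algebra.smul_def]
  exact Submodule.smul_mem _ _ (Submodule.subset_span ⟨k, rfl⟩)

/-- A functional vanishing on all values `q(u)` turns `q` into a scalar polynomial vanishing on
the infinite field `K`, so it also kills every coefficient of `q`. -/
theorem coeff_mem_span_range_eval [Infinite K] (q : A[X]) (m : ℕ) :
    q.coeff m ∈ Submodule.span K (Set.range fun u : K => q.eval (algebraMap K A u)) := by
  by_contra hm
  obtain ⟨f, hfm, hker⟩ := Submodule.exists_le_ker_of_notMem hm
  set qf : K[X] := ∑ k ∈ q.support, monomial k (f (q.coeff k))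
  have hcoeff : qf.coeff m = f (q.coeff m) := by
    by_cases hk : m ∈ q.support
    · simp [qf, coeff_monomial, hk]
    · simp_all [qf, coeff_monomial]
  have hzero : qf = 0 := funext fun u => by
    have hu : f (q.eval (algebraMap K A u)) = 0 := hker (Submodule.subset_span ⟨u, rfl⟩)
    rw [eval_zero, ← hu, eval_eq_sum (p := q), Polynomial.sum, map_sum, eval_finsetSum]
    refine Finset.sum_congr rfl fun k _ => ?_
    rw [eval_monomial, ← map_pow, ← Algebra.commutes, ← Algebra.smul_def, map_smul, smul_eq_mul,
      mul_comm]
  exact hfm (by rw [← hcoeff, hzero, coeff_zero])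

theorem span_range_coeff_eq_span_range_eval [Infinite K] (q : A[X]) :
    Submodule.span K (Set.range q.coeff)
      = Submodule.span K (Set.range fun u : K => q.eval (algebraMap K A u)) := by
  apply le_antisymm <;> rw [Submodule.span_le] <;> rintro _ ⟨k, rfl⟩
  exacts [coeff_mem_span_range_eval q k, eval_algebraMap_mem_span_range_coeff q k]

end Polynomial

section ShiftOfArgument

variable {n : ℕ} (χ : Fin n → ℂ)

theorem dirDeriv_C (a : ℂ) : dirDeriv χ (C a) = 0 := by
  simp [dirDeriv]

theorem dirDeriv_X (i : Fin n) : dirDeriv χ (X i) = C (χ i) := by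
  simp [dirDeriv, Pi.single_apply]

theorem dirDeriv_add (p q : MvPolynomial (Fin n) ℂ) :
    dirDeriv χ (p + q) = dirDeriv χ p + dirDeriv χ q := by
  simp [dirDeriv, mul_add, Finset.sum_add_distrib]

theorem dirDeriv_mul (p q : MvPolynomial (Fin n) ℂ) :
    dirDeriv χ (p * q) = dirDeriv χ p * q + p * dirDeriv χ q := by
  simp only [dirDeriv, Derivation.leibniz, smul_eq_mul, Finset.sum_mul, Finset.mul_sum,
    ← Finset.sum_add_distrib]
  exact Finset.sum_congr rfl fun i _ => by ring

theorem shiftBy_zero : shiftBy χ 0 = AlgHom.id ℂ (MvPolynomial (Fin n) ℂ) :=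
  algHom_ext fun i => by simp [shiftBy]

/-- `P(y + uχ)` with `u` a formal variable: `τ_u P` is its value at `u`. -/
noncomputable def formalShift :
    MvPolynomial (Fin n) ℂ →ₐ[ℂ] Polynomial (MvPolynomial (Fin n) ℂ) :=
  aeval fun i => Polynomial.C (X i) + Polynomial.X * Polynomial.C (C (χ i))

theorem eval_C_formalShift (u : ℂ) (P : MvPolynomial (Fin n) ℂ) :
    (formalShift χ P).eval (C u) = shiftBy χ u P := by
  have h : ((Polynomial.aeval (C u)).restrictScalars ℂ).comp (formalShift χ) = shiftBy χ u :=
    algHom_ext fun i => by simp [formalShift, shiftBy, mul_comm (C u)]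
  simpa [Polynomial.coe_aeval_eq_eval] using DFunLike.congr_fun h P

theorem coeff_zero_formalShift (P : MvPolynomial (Fin n) ℂ) : (formalShift χ P).coeff 0 = P := by
  rw [Polynomial.coeff_zero_eq_eval_zero, ← C_0, eval_C_formalShift, shiftBy_zero, AlgHom.id_apply]

theorem derivative_formalShift (P : MvPolynomial (Fin n) ℂ) :
    Polynomial.derivative (formalShift χ P) = formalShift χ (dirDeriv χ P) := by
  induction P using MvPolynomial.induction_on with
  | C a => simp [formalShift, dirDeriv_C, algebraMap_eq]
  | add p q hp hq => rw [map_add, Polynomial.derivative_add, hp, hq, dirDeriv_add, map_add]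
  | mul_X p i hp =>
    rw [map_mul, Polynomial.derivative_mul, hp, dirDeriv_mul, dirDeriv_X, map_add, map_mul]
    simp [formalShift, algebraMap_eq]

/-- Taylor's formula in the direction `χ`. -/
theorem iterate_dirDeriv_eq_factorial_smul_coeff_formalShift (P : MvPolynomial (Fin n) ℂ)
    (m : ℕ) : (dirDeriv χ)^[m] P = (m.factorial : ℂ) • (formalShift χ P).coeff m := by
  have hiter : Polynomial.derivative^[m] (formalShift χ P) = formalShift χ ((dirDeriv χ)^[m] P) :=
    (Function.Semiconj.iterate_right (f := ⇑(formalShift χ)) (ga := dirDeriv χ)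
      (gb := ⇑Polynomial.derivative) (fun P => (derivative_formalShift χ P).symm) m P).symm
  rw [← coeff_zero_formalShift χ ((dirDeriv χ)^[m] P), ← hiter, Polynomial.coeff_iterate_derivative,
    zero_add, Nat.descFactorial_self, Nat.cast_smul_eq_nsmul]

theorem span_range_iterate_dirDeriv_eq_span_range_coeff (P : MvPolynomial (Fin n) ℂ) :
    Submodule.span ℂ (Set.range fun m => (dirDeriv χ)^[m] P)
      = Submodule.span ℂ (Set.range (formalShift χ P).coeff) := by
  have hfact (m : ℕ) : (m.factorial : ℂ) ≠ 0 := Nat.cast_ne_zero.2 m.factorial_ne_zero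
  apply le_antisymm <;> rw [Submodule.span_le] <;> rintro _ ⟨m, rfl⟩
  · dsimp only
    rw [iterate_dirDeriv_eq_factorial_smul_coeff_formalShift]
    exact Submodule.smul_mem _ _ (Submodule.subset_span ⟨m, rfl⟩)
  · rw [← inv_smul_smul₀ (hfact m) ((formalShift χ P).coeff m),
      ← iterate_dirDeriv_eq_factorial_smul_coeff_formalShift]
    exact Submodule.smul_mem _ _ (Submodule.subset_span ⟨m, rfl⟩)

theorem span_range_iterate_dirDeriv_eq_span_range_shiftBy (P : MvPolynomial (Fin n) ℂ) :
    Submodule.span ℂ (Set.range fun m => (dirDeriv χ)^[m] P)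
      = Submodule.span ℂ (Set.range fun u => shiftBy χ u P) := by
  rw [span_range_iterate_dirDeriv_eq_span_range_coeff,
    Polynomial.span_range_coeff_eq_span_range_eval]
  simp only [algebraMap_eq, eval_C_formalShift]

end ShiftOfArgument

theorem shift_of_argument_subalgebra_eq {n : ℕ} (χ : Fin n → ℂ)
    (S : Set (MvPolynomial (Fin n) ℂ)) :
    Algebra.adjoin ℂ {q | ∃ P ∈ S, ∃ m : ℕ, q = (dirDeriv χ)^[m] P}
      = Algebra.adjoin ℂ {q | ∃ P ∈ S, ∃ u : ℂ, q = shiftBy χ u P} := by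
  have hD : {q | ∃ P ∈ S, ∃ m : ℕ, q = (dirDeriv χ)^[m] P}
      = ⋃ P ∈ S, Set.range fun m => (dirDeriv χ)^[m] P := by
    ext; simp [eq_comm]
  have hτ : {q | ∃ P ∈ S, ∃ u : ℂ, q = shiftBy χ u P}
      = ⋃ P ∈ S, Set.range fun u => shiftBy χ u P := by
    ext; simp [eq_comm]
  have hspan : Submodule.span ℂ {q | ∃ P ∈ S, ∃ m : ℕ, q = (dirDeriv χ)^[m] P}
      = Submodule.span ℂ {q | ∃ P ∈ S, ∃ u : ℂ, q = shiftBy χ u P} := by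
    simp only [hD, hτ, Submodule.span_iUnion₂, span_range_iterate_dirDeriv_eq_span_range_shiftBy]
  rw [← Algebra.adjoin_span, hspan, Algebra.adjoin_span]
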